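/- Let M = (m_i)_{i=0}^∞ be a sequence of integers with m_0 = 1 and m_i ≥ 2 for all i ≥ 1, and let r ≥ 2. Let M^{(r)} denote the shifted sequence (1, m_{r+1}, m_{r+2}, …) and F_r(q) := Σ_{n≥0} p_{M^{(r)}}(n) q^n its generating function. Then in ℤ⟦q⟧: Σ_{n≥1} p_M(m_1 m_2 ⋯ m_r n − 1) q^n = H_{(m_2, m_3, …, m_r)}(q) · F_r(q). -/

import Mathlib

/-- `pM m n` = number of partitions of `n` into parts of the form `m 0 * m 1 * ⋯ * m r`. -/
noncomputable def pM (m : ℕ → ℕ) (n : ℕ) : ℕ :=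
  Nat.card {p : n.Partition // ∀ j ∈ p.parts, ∃ r : ℕ, j = ∏ i ∈ Finset.range (r + 1), m i}

/-- Generating function of `pM`. -/
noncomputable def FM (m : ℕ → ℕ) : PowerSeries ℤ := PowerSeries.mk fun n => (pM m n : ℤ)

/-- The operator `U_m` on `ℤ⟦q⟧`, sending `∑ a(n) qⁿ` to `∑ a(m·n) qⁿ`. -/
noncomputable def U (m : ℕ) (f : PowerSeries ℤ) : PowerSeries ℤ :=
  PowerSeries.mk fun n => PowerSeries.coeff (m * n) f

/-- Auxiliary: the series `H` defined by recursion on a reversed index list. -/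
noncomputable def HserRev : List ℕ → PowerSeries ℤ
  | [] => PowerSeries.X * PowerSeries.invUnitsSub (1 : ℤˣ)
  | mhead :: rest => U mhead (PowerSeries.invUnitsSub (1 : ℤˣ) * HserRev rest)

/-- `Hser [m₁, …, m_k] = H_{(m₁,…,m_k)}`: one has `Hser [] = H_∅ = q/(1-q)` and
`H_{(m₁,…,m_k)} = U_{m_k}((1/(1-q)) · H_{(m₁,…,m_{k-1})})`. -/
noncomputable def Hser (l : List ℕ) : PowerSeries ℤ := HserRev l.reverse

/-! Removing one part `1` from an `M`-ary partition, and dividing all parts by `m₁` when there is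
no part `1`, gives `p_M(n) = p_M(n - 1) + [m₁ ∣ n] p_{M^{(1)}}(n / m₁)`, that is
`(1 - q) F_M(q) = F_{M^{(1)}}(q^{m₁})`. Since `U_a (f(q) · g(q^a)) = U_a(f) · g`, applying `U_{m_{k+1}}`
to `H · F_k` and writing `F_k = (1 - q)⁻¹ F_{k+1}(q^{m_{k+1}})` turns it into
`U_{m_{k+1}}((1 - q)⁻¹ H) · F_{k+1}`, which is the recursion defining `H`. The induction starts from
`∑ p_M(n - 1) qⁿ = q F_M(q)`, and `U_{m₁}(q / (1 - q)) = q / (1 - q)`. -/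

open Finset PowerSeries

noncomputable def partitionCount (S : Set ℕ) (n : ℕ) : ℕ :=
  Nat.card {p : n.Partition // ∀ j ∈ p.parts, j ∈ S}

lemma partitionCount_zero (S : Set ℕ) : partitionCount S 0 = 1 :=
  Nat.card_eq_one_iff_unique.2 ⟨inferInstance, ⟨⟨default, by simp⟩⟩⟩

lemma Nat.card_subtype_eq_card_and_add_card_and_not {α : Type*} [Finite α] (P Q : α → Prop) :
    Nat.card {x // P x} = Nat.card {x // P x ∧ Q x} + Nat.card {x // P x ∧ ¬Q x} := by
  classical
  rw [← Nat.card_sum]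
  exact Nat.card_congr <| (Equiv.sumCompl fun x : Subtype P => Q x).symm.trans <|
    (Equiv.subtypeSubtypeEquivSubtypeInter P Q).sumCongr
      (Equiv.subtypeSubtypeEquivSubtypeInter P (¬Q ·))

lemma card_partitions_with_one {S : Set ℕ} (hS : 1 ∈ S) (n : ℕ) :
    Nat.card {p : (n + 1).Partition // (∀ j ∈ p.parts, j ∈ S) ∧ 1 ∈ p.parts} =
      partitionCount S n := by
  refine Nat.card_congr <| (Equiv.subtypeEquivRight fun _ => and_comm).trans <|
    (Equiv.subtypeSubtypeEquivSubtypeInter _ _).symm.trans <|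
    (Nat.Partition.partitionWithPartEquiv le_rfl (Nat.le_add_left 1 n)).subtypeEquiv fun p => ?_
  conv_lhs => rw [← Multiset.cons_erase p.2]
  simp only [Nat.Partition.partitionWithPartEquiv_apply_parts, Multiset.forall_mem_cons]
  exact and_iff_right hS

lemma partitionCount_insert_one_succ {T : Set ℕ} (hT : 1 ∉ T) (n : ℕ) :
    partitionCount (insert 1 T) (n + 1) =
      partitionCount (insert 1 T) n + partitionCount T (n + 1) := by
  rw [partitionCount, Nat.card_subtype_eq_card_and_add_card_and_not _ (1 ∈ ·.parts),
    card_partitions_with_one (Set.mem_insert 1 T)]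
  congr 1
  refine Nat.card_congr (Equiv.subtypeEquivRight fun p => ⟨fun ⟨h, h1⟩ j hj => ?_, fun h => ?_⟩)
  · exact (h j hj).resolve_left (by rintro rfl; exact h1 hj)
  · exact ⟨fun j hj => Or.inr (h j hj), fun h1 => hT (h 1 h1)⟩

section Scaling

variable {a : ℕ} (T : Set ℕ)

lemma Multiset.exists_map_mul_eq_of_forall_dvd {s : Multiset ℕ} (h : ∀ j ∈ s, a ∣ j) :
    ∃ t : Multiset ℕ, t.map (a * ·) = s :=
  ⟨s.map (· / a), by
    rw [Multiset.map_map]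
    conv_rhs => rw [← Multiset.map_id s]
    exact Multiset.map_congr rfl fun j hj => Nat.mul_div_cancel' (h j hj)⟩

lemma partitionCount_image_mul_of_not_dvd {n : ℕ} (hn : ¬a ∣ n) :
    partitionCount ((a * ·) '' T) n = 0 := by
  have : IsEmpty {p : n.Partition // ∀ j ∈ p.parts, j ∈ (a * ·) '' T} := ⟨fun p => hn <|
    p.1.parts_sum ▸ Multiset.dvd_sum fun j hj => by
      obtain ⟨t, -, rfl⟩ := p.2 j hj
      exact dvd_mul_right a t⟩
  exact Nat.card_of_isEmpty

lemma partitionCount_image_mul_mul (ha : a ≠ 0) (k : ℕ) :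
    partitionCount ((a * ·) '' T) (a * k) = partitionCount T k := by
  symm
  refine Nat.card_eq_of_bijective
    (fun p => ⟨⟨p.1.parts.map (a * ·), ?_, ?_⟩, ?_⟩) ⟨fun p q hpq => ?_, fun q => ?_⟩
  · simp only [Multiset.mem_map]
    rintro _ ⟨j, hj, rfl⟩
    exact Nat.mul_pos (Nat.pos_of_ne_zero ha) (p.1.parts_pos hj)
  · rw [Multiset.sum_map_mul_left, Multiset.map_id', p.1.parts_sum]
  · simp only [Multiset.mem_map]
    rintro _ ⟨j, hj, rfl⟩
    exact ⟨j, p.2 j hj, rfl⟩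
  · exact Subtype.ext <| Nat.Partition.ext <|
      Multiset.map_injective (mul_right_injective₀ ha) (congrArg (·.1.parts) hpq)
  · obtain ⟨t, ht⟩ := Multiset.exists_map_mul_eq_of_forall_dvd (s := q.1.parts) fun j hj => by
      obtain ⟨s, -, rfl⟩ := q.2 j hj
      exact dvd_mul_right a s
    have hmem : ∀ j ∈ t, a * j ∈ q.1.parts := fun j hj => ht ▸ Multiset.mem_map_of_mem _ hj
    refine ⟨⟨⟨t, fun hj => Nat.pos_of_mul_pos_left (q.1.parts_pos (hmem _ hj)), ?_⟩,
      fun j hj => ?_⟩, Subtype.ext <| Nat.Partition.ext ht⟩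
    · apply Nat.eq_of_mul_eq_mul_left (Nat.pos_of_ne_zero ha)
      rw [← q.1.parts_sum, ← ht, Multiset.sum_map_mul_left, Multiset.map_id']
    · obtain ⟨s, hs, hsj⟩ := q.2 _ (hmem j hj)
      rwa [← mul_right_injective₀ ha hsj]

end Scaling

section Series

variable (R : Type*) [CommRing R]

noncomputable def partitionSeries (S : Set ℕ) : R⟦X⟧ :=
  mk fun n => (partitionCount S n : R)

lemma one_sub_X_mul_partitionSeries_insert_one {T : Set ℕ} (hT : 1 ∉ T) :
    (1 - X) * partitionSeries R (insert 1 T) = partitionSeries R T := by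
  ext (_ | n)
  · simp [partitionSeries, partitionCount_zero]
  · rw [sub_mul, one_mul, map_sub, coeff_succ_X_mul]
    simp [partitionSeries, partitionCount_insert_one_succ hT]

lemma partitionSeries_image_mul {a : ℕ} (ha : a ≠ 0) (T : Set ℕ) :
    partitionSeries R ((a * ·) '' T) = expand a ha (partitionSeries R T) := by
  ext n
  rw [coeff_expand]
  split_ifs with h
  · obtain ⟨k, rfl⟩ := h
    simp [partitionSeries, partitionCount_image_mul_mul T ha, Nat.mul_div_cancel_left k
      (Nat.pos_of_ne_zero ha)]
  · simp [partitionSeries, partitionCount_image_mul_of_not_dvd T h]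

end Series

lemma U_mul_expand {a : ℕ} (ha : a ≠ 0) (f g : ℤ⟦X⟧) :
    U a (f * expand a ha g) = U a f * g := by
  ext n
  -- in the coefficient of `q^{a n}` only the pairs `(a i, a j)` contribute, as `a ∣ j` is forced
  let scale : ℕ × ℕ ↪ ℕ × ℕ :=
    ⟨Prod.map (a * ·) (a * ·), (mul_right_injective₀ ha).prodMap (mul_right_injective₀ ha)⟩
  have hsub : (antidiagonal n).map scale ⊆ antidiagonal (a * n) := by
    intro x hx
    obtain ⟨p, hp, rfl⟩ := Finset.mem_map.1 hx
    rw [HasAntidiagonal.mem_antidiagonal] at hp ⊢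
    simp [scale, ← hp, mul_add]
  have hzero : ∀ x ∈ antidiagonal (a * n), x ∉ (antidiagonal n).map scale →
      coeff x.1 f * coeff x.2 (expand a ha g) = 0 := by
    intro x hx hx'
    rw [coeff_expand, if_neg, mul_zero]
    rintro ⟨j, hj⟩
    rw [HasAntidiagonal.mem_antidiagonal] at hx
    have hjn : j ≤ n := by
      by_contra! hlt
      nlinarith [Nat.pos_of_ne_zero ha]
    refine hx' (Finset.mem_map.2 ⟨(n - j, j), by simp [hjn], Prod.ext ?_ hj.symm⟩)
    simp only [scale, Function.Embedding.coeFn_mk, Prod.map_fst]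
    rw [Nat.mul_sub, ← hx, hj, Nat.add_sub_cancel]
  simp only [U, coeff_mk, coeff_mul, ← Finset.sum_subset hsub hzero, Finset.sum_map]
  simp [scale]

lemma U_X_mul_invUnitsSub {a : ℕ} (ha : a ≠ 0) :
    U a (X * invUnitsSub 1) = X * invUnitsSub (1 : ℤˣ) := by
  ext (_ | n)
  · simp [U]
  · obtain ⟨b, hb⟩ := Nat.exists_eq_add_one_of_ne_zero (mul_ne_zero ha n.succ_ne_zero)
    simp [U, hb, coeff_succ_X_mul]

section MAry

variable (m : ℕ → ℕ)

/-- The shifted sequence `M^{(k)} = (1, m_{k+1}, m_{k+2}, …)`. -/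
def shiftSeq (k : ℕ) : ℕ → ℕ := fun i => if i = 0 then 1 else m (k + i)

def mParts : Set ℕ := {j | ∃ r, j = ∏ i ∈ range (r + 1), m i}

lemma FM_eq_partitionSeries : FM m = partitionSeries ℤ (mParts m) := rfl

lemma shiftSeq_zero (hm0 : m 0 = 1) : shiftSeq m 0 = m := by
  funext i
  cases i <;> simp [shiftSeq, hm0]

lemma prod_range_succ_shiftSeq (k r : ℕ) :
    ∏ i ∈ range (r + 1), shiftSeq m k i = ∏ i ∈ range r, m (k + (i + 1)) := by
  simp [prod_range_succ', shiftSeq]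

lemma mParts_shiftSeq (k : ℕ) :
    mParts (shiftSeq m k) = insert 1 ((m (k + 1) * ·) '' mParts (shiftSeq m (k + 1))) := by
  have hprod (r : ℕ) : ∏ i ∈ range (r + 1), m (k + (i + 1)) =
      m (k + 1) * ∏ i ∈ range r, m (k + 1 + (i + 1)) := by
    rw [prod_range_succ', mul_comm]
    exact congrArg _ (prod_congr rfl fun i _ => by congr 1; omega)
  ext j
  simp only [mParts, Set.mem_insert_iff, Set.mem_image, Set.mem_ofPred_eq, prod_range_succ_shiftSeq]
  constructor
  · rintro ⟨_ | r, rfl⟩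
    · exact Or.inl rfl
    · exact Or.inr ⟨_, ⟨r, rfl⟩, (hprod r).symm⟩
  · rintro (rfl | ⟨_, ⟨r, rfl⟩, rfl⟩)
    · exact ⟨0, rfl⟩
    · exact ⟨r + 1, (hprod r).symm⟩

lemma one_sub_X_mul_FM_shiftSeq {k : ℕ} (hk : 2 ≤ m (k + 1)) :
    (1 - X) * FM (shiftSeq m k) =
      expand (m (k + 1)) (by omega) (FM (shiftSeq m (k + 1))) := by
  have h1 : 1 ∉ (m (k + 1) * ·) '' mParts (shiftSeq m (k + 1)) := by
    rintro ⟨t, -, ht⟩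
    have := Nat.eq_one_of_mul_eq_one_right ht
    omega
  simp only [FM_eq_partitionSeries]
  rw [mParts_shiftSeq, one_sub_X_mul_partitionSeries_insert_one ℤ h1, partitionSeries_image_mul]

lemma U_mul_FM_shiftSeq {k : ℕ} (hk : 2 ≤ m (k + 1)) (f : ℤ⟦X⟧) :
    U (m (k + 1)) (f * FM (shiftSeq m k)) =
      U (m (k + 1)) (invUnitsSub 1 * f) * FM (shiftSeq m (k + 1)) := by
  have hinv : invUnitsSub (1 : ℤˣ) * (1 - X) = 1 := by simpa using invUnitsSub_mul_sub (1 : ℤˣ)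
  have hF : f * FM (shiftSeq m k) =
      invUnitsSub 1 * f * expand (m (k + 1)) (by omega) (FM (shiftSeq m (k + 1))) := by
    rw [← one_sub_X_mul_FM_shiftSeq m hk]
    linear_combination (-(f * FM (shiftSeq m k))) * hinv
  rw [hF, U_mul_expand]

noncomputable def pMPredSeries (k : ℕ) : ℤ⟦X⟧ :=
  mk fun n => if n = 0 then 0 else (pM m ((∏ t ∈ Icc 1 k, m t) * n - 1) : ℤ)

lemma pMPredSeries_zero (hm0 : m 0 = 1) : pMPredSeries m 0 = X * FM (shiftSeq m 0) := by
  rw [shiftSeq_zero m hm0]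
  ext (_ | n) <;> simp [pMPredSeries, coeff_succ_X_mul, FM]

lemma pMPredSeries_succ {k : ℕ} (hk : m (k + 1) ≠ 0) :
    pMPredSeries m (k + 1) = U (m (k + 1)) (pMPredSeries m k) := by
  ext n
  simp [pMPredSeries, U, hk, prod_Icc_succ_top, mul_assoc]

end MAry

lemma Hser_append_singleton (l : List ℕ) (a : ℕ) :
    Hser (l ++ [a]) = U a (invUnitsSub 1 * Hser l) := by
  simp [Hser, HserRev]

lemma Finset.sort_Icc (a b : ℕ) : (Icc a b).sort (· ≤ ·) = List.range' a (b + 1 - a) := by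
  have hIcc : Icc a b = (List.range' a (b + 1 - a)).toFinset := by
    ext
    simp only [mem_Icc, List.mem_toFinset, List.mem_range'_1]
    omega
  rw [hIcc, List.toFinset_sort _ List.nodup_range']
  exact List.pairwise_le_range' _

lemma pMPredSeries_succ_eq_Hser_mul_FM (m : ℕ → ℕ) (hm0 : m 0 = 1)
    (hm : ∀ k, 2 ≤ m (k + 1)) (k : ℕ) :
    pMPredSeries m (k + 1) = Hser ((List.range' 2 k).map m) * FM (shiftSeq m (k + 1)) := by
  have hm_ne_zero (k : ℕ) : m (k + 1) ≠ 0 := by have := hm k; omega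
  induction k with
  | zero =>
    rw [pMPredSeries_succ m (hm_ne_zero _), pMPredSeries_zero m hm0,
      U_mul_FM_shiftSeq m (hm 0), mul_comm _ X, U_X_mul_invUnitsSub (hm_ne_zero _)]
    rfl
  | succ k ih =>
    rw [pMPredSeries_succ m (hm_ne_zero _), ih, U_mul_FM_shiftSeq m (hm (k + 1)),
      List.range'_concat, show 2 + 1 * k = k + 1 + 1 by omega, List.map_append,
      List.map_singleton, Hser_append_singleton]

/-- Key identity: `∑_{n≥1} p_M(m₁ ⋯ m_r n - 1) qⁿ = H_{(m₂,…,m_r)}(q) · F_r(q)`, where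
`F_r` is the generating function of the partition function of the shifted sequence
`(1, m_{r+1}, m_{r+2}, …)`. -/
theorem genFun_eq_H_mul_F (m : ℕ → ℕ) (hm0 : m 0 = 1) (hm : ∀ i, 1 ≤ i → 2 ≤ m i)
    (r : ℕ) (hr : 2 ≤ r) :
    (PowerSeries.mk fun n =>
        if n = 0 then 0 else (pM m ((∏ t ∈ Finset.Icc 1 r, m t) * n - 1) : ℤ)) =
      Hser (((Finset.Icc 2 r).sort (· ≤ ·)).map m) *
        FM (fun i => if i = 0 then 1 else m (r + i)) := by
  obtain ⟨k, rfl⟩ : ∃ k, r = k + 1 := ⟨r - 1, by omega⟩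
  rw [Finset.sort_Icc, show k + 1 + 1 - 2 = k by omega]
  exact pMPredSeries_succ_eq_Hser_mul_FM m hm0 (fun k => hm (k + 1) k.succ_pos) k
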